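/- For the system ẋ = -y, ẏ = x + 2z, ż = -z + a₁x² + 6a₁xy + 4a₁xz - a₁y² + 4a₁yz, the surface F(x,y,z) = z + a₁(x-y)² - 2a₁y² = 0 is invariant, and substituting z = -(a₁(x-y)² - 2a₁y²) into the first two equations yields the planar system ẋ = -y, ẏ = x - 2a₁x² + 4a₁xy + 2a₁y². That is: (i) the vector field applied to F vanishes on {F = 0}; (ii) on {F = 0}, ẏ = x + 2z equals x - 2a₁x² + 4a₁xy + 2a₁y². -/

import Mathlib

noncomputable def F16 (a₁ x y z : ℝ) : ℝ := z + a₁*(x - y)^2 - 2*a₁*y^2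

/-- The surface F = 0 is invariant for ẋ = -y, ẏ = x+2z,
ż = -z + a₁x² + 6a₁xy + 4a₁xz - a₁y² + 4a₁yz, and on F = 0 the restriction
of ẏ equals x - 2a₁x² + 4a₁xy + 2a₁y². -/
theorem stmt_16 : ∀ a₁ x y z : ℝ,
    (F16 a₁ x y z = 0 →
      (-y) * deriv (fun s => F16 a₁ s y z) x
      + (x + 2*z) * deriv (fun s => F16 a₁ x s z) y
      + (-z + a₁*x^2 + 6*a₁*x*y + 4*a₁*x*z - a₁*y^2 + 4*a₁*y*z)
          * deriv (fun s => F16 a₁ x y s) z = 0)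
    ∧ (F16 a₁ x y z = 0 →
        x + 2*z = x - 2*a₁*x^2 + 4*a₁*x*y + 2*a₁*y^2) := by
  intro a₁ x y z
  have hz : ∀ u v w : ℝ, deriv (fun s => F16 a₁ u v s) w = 1 := by
    intro u v w
    unfold F16
    simp
  have hx : deriv (fun s => F16 a₁ s y z) x = 2*a₁*(x - y) := by
    unfold F16
    have : (fun s => z + a₁*(s - y)^2 - 2*a₁*y^2) = fun s => a₁*(s-y)^2 + (z - 2*a₁*y^2) := by
      funext s; ring
    rw [this]
    rw [deriv_fun_add (by fun_prop) (by fun_prop)]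
    simp
    ring
  have hy : deriv (fun s => F16 a₁ x s z) y = -2*a₁*(x - y) - 4*a₁*y := by
    unfold F16
    have h1 : HasDerivAt (fun s : ℝ => z + a₁*(x - s)^2 - 2*a₁*s^2)
        (a₁*(2*(x-y)*(-1)) - 2*a₁*(2*y)) y := by
      have hA : HasDerivAt (fun s : ℝ => (x - s)^2) (2*(x-y)*(-1)) y := by
        have := ((hasDerivAt_id y).const_sub x).fun_pow 2
        simpa using this
      have := ((hA.const_mul a₁).const_add z).fun_sub (((hasDerivAt_id y).fun_pow 2).const_mul (2*a₁))
      simpa [mul_comm, mul_assoc, mul_left_comm] using this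
    rw [h1.deriv]; ring
  rw [hx, hy, hz]
  unfold F16
  constructor <;> intro hF <;> nlinarith [hF, sq_nonneg (x-y)]
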